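/- Let Λ = 2E₈ ⊥ 2U ⊥ 3I with η = ε₁ + ε₂ + ε₃ and Λ₀ = η^⊥. If h, h', h'' are three distinct special vectors in Λ₀ spanning a positive definite sublattice, then h + h' + h'' = 0. -/

import Mathlib

open Matrix

/-- Edges of the E₈ Dynkin diagram (chain 0-1-2-3-4-5-6 with node 7 attached to node 2). -/
def e8Edges : List (Fin 8 × Fin 8) := [(0,1),(1,2),(2,3),(3,4),(4,5),(5,6),(2,7)]

/-- Gram matrix of the E₈ root lattice. -/
def E8 : Matrix (Fin 8) (Fin 8) ℤ := Matrix.of fun i j =>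
  if i = j then 2 else if (i, j) ∈ e8Edges ∨ (j, i) ∈ e8Edges then -1 else 0

/-- Gram matrix of the hyperbolic plane U. -/
def U2 : Matrix (Fin 2) (Fin 2) ℤ := !![0, 1; 1, 0]

/-- Index type for Λ = 2E₈ ⊥ 2U ⊥ 3I (rank 23). -/
abbrev Idx := (Fin 8 ⊕ Fin 8) ⊕ (Fin 2 ⊕ Fin 2) ⊕ Fin 3

/-- Gram matrix of Λ = 2E₈ ⊥ 2U ⊥ 3I. -/
def G : Matrix Idx Idx ℤ := Matrix.of fun i j =>
  match i, j with
  | Sum.inl (Sum.inl a), Sum.inl (Sum.inl b) => E8 a b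
  | Sum.inl (Sum.inr a), Sum.inl (Sum.inr b) => E8 a b
  | Sum.inr (Sum.inl (Sum.inl a)), Sum.inr (Sum.inl (Sum.inl b)) => U2 a b
  | Sum.inr (Sum.inl (Sum.inr a)), Sum.inr (Sum.inl (Sum.inr b)) => U2 a b
  | Sum.inr (Sum.inr a), Sum.inr (Sum.inr b) => if a = b then 1 else 0
  | _, _ => 0

/-- The bilinear form of Λ. -/
def Bf (x y : Idx → ℤ) : ℤ := x ⬝ᵥ G.mulVec y

/-- The generator εₖ of the k-th I-summand. -/
def εv (k : Fin 3) : Idx → ℤ := fun i => match i with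
  | Sum.inr (Sum.inr j) => if j = k then 1 else 0
  | _ => 0

/-- η = ε₁ + ε₂ + ε₃. -/
def η : Idx → ℤ := εv 0 + εv 1 + εv 2

/-- A special vector: an element h of Λ₀ = η^⊥ with h·h = 6 and η − h divisible by 3 in Λ. -/
def IsSpecial (h : Idx → ℤ) : Prop :=
  Bf h η = 0 ∧ Bf h h = 6 ∧ ∃ w : Idx → ℤ, η - h = 3 • w

/-! Two special vectors differ by an element of `3Λ`, so `(h - h')² = 12 - 2 h·h'` is a positive
multiple of 9, while `(h + h')² = 12 + 2 h·h' ≥ 0`; the only value of `h·h'` compatible with both is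
`-3`. With all three products equal to `-3`, `(h + h' + h'')² = 18 - 18 = 0`, and positive
definiteness forces `h + h' + h'' = 0`. -/

open LinearMap (BilinForm)

section BilinForm

variable {M : Type*} [AddCommGroup M] {B : BilinForm ℤ M}

theorem LinearMap.BilinForm.IsSymm.apply_eq_neg_three (hB : B.IsSymm) {x y v : M}
    (hx : B x x = 6) (hy : B y y = 6) (hxy : x ≠ y) (hv : x - y = 3 • v)
    (hpos : ∀ a b : ℤ, a • x + b • y ≠ 0 → 0 < B (a • x + b • y) (a • x + b • y)) :
    B x y = -3 := by
  have hsub : 0 < B (x - y) (x - y) := by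
    simpa [sub_eq_add_neg] using hpos 1 (-1) (by simpa [← sub_eq_add_neg, sub_eq_zero])
  have hadd : 0 ≤ B (x + y) (x + y) := by
    by_cases hz : x + y = 0
    · simp [hz]
    · simpa using (hpos 1 1 (by simpa)).le
  have hsub_eq : B (x - y) (x - y) = 12 - 2 * B x y := by
    simp only [map_sub, LinearMap.sub_apply, hx, hy, hB.eq y x]; ring
  have hadd_eq : B (x + y) (x + y) = 12 + 2 * B x y := by
    simp only [map_add, LinearMap.add_apply, hx, hy, hB.eq y x]; ring
  have hnine : B (x - y) (x - y) = 9 * B v v := by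
    rw [hv]; simp only [map_nsmul, LinearMap.smul_apply, nsmul_eq_mul]; ring
  omega

theorem LinearMap.BilinForm.IsSymm.apply_add_add_self_eq_zero (hB : B.IsSymm) {x y z : M}
    (hx : B x x = 6) (hy : B y y = 6) (hz : B z z = 6)
    (hxy : B x y = -3) (hxz : B x z = -3) (hyz : B y z = -3) :
    B (x + y + z) (x + y + z) = 0 := by
  simp only [map_add, LinearMap.add_apply, hx, hy, hz, hB.eq y x, hB.eq z x, hB.eq z y,
    hxy, hxz, hyz]
  norm_num

end BilinForm

lemma Bf_eq_toBilin' (x y : Idx → ℤ) : Bf x y = Matrix.toBilin' G x y :=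
  (Matrix.toBilin'_apply' G x y).symm

lemma isSymm_toBilin'_G : (Matrix.toBilin' G).IsSymm :=
  Matrix.isSymm_toBilin'_iff_isSymm.mpr (by decide)

lemma IsSpecial.exists_sub_eq_three_smul {h h' : Idx → ℤ} (hs : IsSpecial h)
    (hs' : IsSpecial h') : ∃ v : Idx → ℤ, h - h' = 3 • v := by
  obtain ⟨-, -, w, hw⟩ := hs
  obtain ⟨-, -, w', hw'⟩ := hs'
  exact ⟨w' - w, by rw [smul_sub, ← hw, ← hw']; abel⟩

lemma IsSpecial.Bf_eq_neg_three {h h' : Idx → ℤ} (hs : IsSpecial h) (hs' : IsSpecial h')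
    (hne : h ≠ h')
    (hpos : ∀ a b : ℤ, a • h + b • h' ≠ 0 → 0 < Bf (a • h + b • h') (a • h + b • h')) :
    Bf h h' = -3 := by
  obtain ⟨v, hv⟩ := hs.exists_sub_eq_three_smul hs'
  simp only [IsSpecial, Bf_eq_toBilin'] at hs hs' hpos ⊢
  exact isSymm_toBilin'_G.apply_eq_neg_three hs.2.1 hs'.2.1 hne hv hpos

theorem stmt5 (h h' h'' : Idx → ℤ)
    (hs : IsSpecial h) (hs' : IsSpecial h') (hs'' : IsSpecial h'')
    (hne : h ≠ h') (hne' : h ≠ h'') (hne'' : h' ≠ h'')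
    -- h, h', h'' span a positive definite sublattice:
    (hpos : ∀ a b c : ℤ, a • h + b • h' + c • h'' ≠ 0 →
      0 < Bf (a • h + b • h' + c • h'') (a • h + b • h' + c • h'')) :
    h + h' + h'' = 0 := by
  have p1 := hs.Bf_eq_neg_three hs' hne fun a b => by simpa using hpos a b 0
  have p2 := hs.Bf_eq_neg_three hs'' hne' fun a c => by simpa using hpos a 0 c
  have p3 := hs'.Bf_eq_neg_three hs'' hne'' fun b c => by simpa using hpos 0 b c
  have hzero : Bf (h + h' + h'') (h + h' + h'') = 0 := by
    simp only [IsSpecial, Bf_eq_toBilin'] at hs hs' hs'' p1 p2 p3 ⊢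
    exact isSymm_toBilin'_G.apply_add_add_self_eq_zero hs.2.1 hs'.2.1 hs''.2.1 p1 p2 p3
  by_contra hsum
  simpa [hzero] using hpos 1 1 1 (by simpa using hsum)
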